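/- Suppose τ ≤ 2f, n ≥ τ + f (so the system has at least τ − f correct objects besides the f faulty ones). Then there exists a faulty set F ⊆ O with |F| = f, a providing set P ⊆ O with |P| = τ and F ⊆ P, and an auditing quorum A ⊆ O with |A| = n − f, such that (P ∩ A) \ F = ∅. Hence an audit collecting logs only from A receives no record of the effective read, and completeness fails for any record threshold t ≥ 1. -/

import Mathlib

/-- With τ ≤ 2f there are a faulty set F, a providing set P ⊇ F of size τ and an
auditing quorum A of size n − f such that the quorum contains no correct object of
the providing set, so completeness fails for any threshold t ≥ 1. -/
theorem stmt_2 {α : Type*} [DecidableEq α] (O : Finset α) (n f τ : ℕ)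
    (hn : O.card = n) (hτ2f : τ ≤ 2 * f) (hnτf : τ + f ≤ n) (hfτ : f ≤ τ) :
    ∃ F P A : Finset α, F ⊆ O ∧ P ⊆ O ∧ A ⊆ O ∧ F ⊆ P ∧
      F.card = f ∧ P.card = τ ∧ A.card = n - f ∧ (P ∩ A) \ F = ∅ := by
  obtain ⟨P, hPO, hPcard⟩ := Finset.exists_subset_card_eq (s := O) (n := τ) (by omega)
  obtain ⟨F, hFP, hFcard⟩ := Finset.exists_subset_card_eq (s := P) (n := f) (by omega)
  have hdisj : Disjoint (O \ P) F :=
    Finset.disjoint_left.mpr fun a ha haF => (Finset.mem_sdiff.mp ha).2 (hFP haF)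
  have hcardU : ((O \ P) ∪ F).card = n - τ + f := by
    rw [Finset.card_union_of_disjoint hdisj, Finset.card_sdiff_of_subset hPO, hn, hPcard, hFcard]
  obtain ⟨A, hAU, hAcard⟩ := Finset.exists_subset_card_eq (s := (O \ P) ∪ F) (n := n - f) (by omega)
  refine ⟨F, P, A, hFP.trans hPO, hPO, ?_, hFP, hFcard, hPcard, hAcard, ?_⟩
  · exact hAU.trans (Finset.union_subset (Finset.sdiff_subset) (hFP.trans hPO))
  · rw [Finset.sdiff_eq_empty_iff_subset]
    intro a ha
    obtain ⟨haP, haA⟩ := Finset.mem_inter.mp ha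
    rcases Finset.mem_union.mp (hAU haA) with h | h
    · exact absurd haP (Finset.mem_sdiff.mp h).2
    · exact h
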